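/- Let (Ω, 𝓕, P) be a probability space and B : [0,1] × Ω → ℝ a standard Brownian motion: B_0 = 0 almost surely, for 0 ≤ s ≤ t ≤ 1 the increment B_t − B_s is independent of (B_r)_{r ≤ s} and is Gaussian with mean 0 and variance t − s, and t ↦ B_t(ω) is continuous for almost every ω. Let F_1, F_2 : ℝ × ℝ → ℝ be smooth functions with bounded derivatives up to order three, both vanishing on the diagonal, and suppose that for all x ∈ ℝ: ∂_y F_1(x,y)|_{y=x} = ∂_y F_2(x,y)|_{y=x} and ∂_y² F_1(x,y)|_{y=x} = ∂_y² F_2(x,y)|_{y=x}. For n ∈ ℕ let t_i = i/n be the uniform partition of [0,1]. Then ∑_{i=0}^{n−1} F_1(B_{t_i}, B_{t_{i+1}}) − ∑_{i=0}^{n−1} F_2(B_{t_i}, B_{t_{i+1}}) converges to 0 in L²(P) as n → ∞. -/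

import Mathlib

open Filter Finset MeasureTheory ProbabilityTheory

section GRSWAux
open Real

lemma grsw_inner_bound (a : ℝ) (i : ℕ) (hi : 1 ≤ i) (y : ℝ) :
    ‖iteratedFDeriv ℝ i (fun y : ℝ => ((a, y) : ℝ × ℝ)) y‖ ≤ 1 := by
  have hfd : ∀ z : ℝ, fderiv ℝ (fun y : ℝ => ((a, y) : ℝ × ℝ)) z
      = ContinuousLinearMap.inr ℝ ℝ ℝ := fun z => (hasFDerivAt_prodMk_right a z).fderiv
  match i, hi with
  | 1, _ =>
    apply ContinuousMultilinearMap.opNorm_le_bound zero_le_one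
    intro m
    rw [iteratedFDeriv_one_apply, hfd, ContinuousLinearMap.inr_apply]
    have : ‖((0 : ℝ), m 0)‖ = ‖m 0‖ := by
      simp [Prod.norm_def]
    rw [this]
    simp
  | (n+2), _ =>
    apply ContinuousMultilinearMap.opNorm_le_bound zero_le_one
    intro m
    have hz : iteratedFDeriv ℝ (n+2) (fun y : ℝ => ((a, y) : ℝ × ℝ)) y m = 0 := by
      rw [iteratedFDeriv_succ_apply_right]
      have h2 : (fun z : ℝ => fderiv ℝ (fun y : ℝ => ((a, y) : ℝ × ℝ)) z)
          = fun _ : ℝ => ContinuousLinearMap.inr ℝ ℝ ℝ := funext hfd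
      rw [h2, iteratedFDeriv_const_of_ne (Nat.succ_ne_zero n)]
      simp
    rw [hz]
    simp only [norm_zero]
    positivity

lemma grsw_taylor (G : ℝ × ℝ → ℝ) (hG : ContDiff ℝ (⊤ : ℕ∞) G) (C : ℝ)
    (hC : ∀ k : ℕ, k ≤ 3 → ∀ z : ℝ × ℝ, ‖iteratedFDeriv ℝ k G z‖ ≤ C)
    (h0 : ∀ a : ℝ, G (a, a) = 0)
    (h1 : ∀ a : ℝ, deriv (fun y => G (a, y)) a = 0)
    (h2 : ∀ a : ℝ, iteratedDeriv 2 (fun y => G (a, y)) a = 0)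
    (a b : ℝ) : |G (a, b)| ≤ (6 * C) * |b - a| ^ 3 := by
  set h : ℝ → ℝ := fun y => G (a, y) with hh_def
  have hinner : ContDiff ℝ (⊤ : ℕ∞) (fun y : ℝ => ((a, y) : ℝ × ℝ)) :=
    contDiff_const.prodMk contDiff_id
  have hh : ContDiff ℝ (⊤ : ℕ∞) h := hG.comp hinner
  -- third derivative bound
  have h3 : ∀ y : ℝ, ‖iteratedDeriv 3 h y‖ ≤ 6 * C := by
    intro y
    have hb : ‖iteratedFDeriv ℝ 3 h y‖ ≤ (3:ℕ).factorial * C * 1 ^ 3 := by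
      have := norm_iteratedFDeriv_comp_le (g := G) (f := fun y : ℝ => ((a, y) : ℝ × ℝ))
        (n := 3) (N := ((⊤ : ℕ∞) : WithTop ℕ∞)) hG hinner (WithTop.coe_le_coe.mpr le_top) y
        (C := C) (D := 1)
        (fun i hi => hC i hi _)
        (fun i hi1 hi3 => by simpa using grsw_inner_bound a i hi1 y)
      simpa [Function.comp_def, hh_def] using this
    have : ‖iteratedDeriv 3 h y‖ ≤ ‖iteratedFDeriv ℝ 3 h y‖ := by
      rw [iteratedDeriv_eq_iteratedFDeriv]
      have := (iteratedFDeriv ℝ 3 h y).le_opNorm (fun _ => (1:ℝ))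
      simpa using this
    calc ‖iteratedDeriv 3 h y‖ ≤ ‖iteratedFDeriv ℝ 3 h y‖ := this
      _ ≤ (3:ℕ).factorial * C * 1 ^ 3 := hb
      _ = 6 * C := by norm_num [Nat.factorial]
  -- second derivative bound
  have hC0 : 0 ≤ C := le_trans (norm_nonneg _) (hC 0 (by norm_num) (0,0))
  have hd2 : ∀ y : ℝ, |iteratedDeriv 2 h y| ≤ (6 * C) * |y - a| := by
    intro y
    have := Convex.norm_image_sub_le_of_norm_deriv_le (f := iteratedDeriv 2 h)
      (C := 6 * C) (s := Set.univ)
      (fun x _ => (hh.differentiable_iteratedDeriv 2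
        (WithTop.coe_lt_coe.mpr (ENat.natCast_lt_top 2))).differentiableAt)
      (fun x _ => by
        rw [← iteratedDeriv_succ]
        exact h3 x)
      convex_univ (Set.mem_univ a) (Set.mem_univ y)
    rw [(h2 a : iteratedDeriv 2 h a = 0), sub_zero] at this
    simpa [Real.norm_eq_abs] using this
  -- first derivative bound on uIcc a b
  have habs : ∀ y ∈ Set.uIcc a b, |y - a| ≤ |b - a| := by
    intro y hy
    rcases le_total a b with hab | hab
    · rw [Set.uIcc_of_le hab] at hy
      rw [abs_of_nonneg (by linarith [hy.1]), abs_of_nonneg (by linarith)]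
      linarith [hy.2]
    · rw [Set.uIcc_of_ge hab] at hy
      rw [abs_of_nonpos (by linarith [hy.2]), abs_of_nonpos (by linarith)]
      linarith [hy.1]
  have hd1 : ∀ y ∈ Set.uIcc a b, |deriv h y| ≤ ((6 * C) * |b - a|) * |b - a| := by
    intro y hy
    have := Convex.norm_image_sub_le_of_norm_deriv_le (f := deriv h)
      (C := (6 * C) * |b - a|) (s := Set.uIcc a b)
      (fun x _ => by
        have := hh.differentiable_iteratedDeriv 1 (by simp [lt_top_iff_ne_top])
        simpa [iteratedDeriv_one] using this.differentiableAt)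
      (fun x hx => by
        have : deriv (deriv h) x = iteratedDeriv 2 h x := by
          rw [show (2:ℕ) = 1 + 1 from rfl, iteratedDeriv_succ, iteratedDeriv_one]
        rw [Real.norm_eq_abs, this]
        calc |iteratedDeriv 2 h x| ≤ (6 * C) * |x - a| := hd2 x
          _ ≤ (6 * C) * |b - a| := by
              apply mul_le_mul_of_nonneg_left (habs x hx) (by positivity))
      (convex_uIcc a b) (Set.left_mem_uIcc) hy
    have h1a : deriv h a = 0 := h1 a
    calc |deriv h y| = ‖deriv h y - deriv h a‖ := by rw [h1a]; simp [Real.norm_eq_abs]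
      _ ≤ ((6 * C) * |b - a|) * ‖y - a‖ := this
      _ ≤ ((6 * C) * |b - a|) * |b - a| := by
          apply mul_le_mul_of_nonneg_left _ (by positivity)
          simpa [Real.norm_eq_abs] using habs y hy
  -- function bound
  have := Convex.norm_image_sub_le_of_norm_deriv_le (f := h)
    (C := ((6 * C) * |b - a|) * |b - a|) (s := Set.uIcc a b)
    (fun x _ => (hh.differentiable (by simp)).differentiableAt)
    (fun x hx => by rw [Real.norm_eq_abs]; exact hd1 x hx)
    (convex_uIcc a b) (Set.left_mem_uIcc) (Set.right_mem_uIcc)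
  have h0a : h a = 0 := h0 a
  have : |G (a, b)| ≤ ((6 * C) * |b - a|) * |b - a| * ‖b - a‖ := by
    have hGb : G (a, b) = h b - h a := by rw [h0a]; simp [hh_def]
    rw [hGb, ← Real.norm_eq_abs]
    exact this
  calc |G (a,b)| ≤ ((6 * C) * |b - a|) * |b - a| * ‖b - a‖ := this
    _ = (6 * C) * |b - a| ^ 3 := by rw [Real.norm_eq_abs]; ring

lemma grsw_integrable_pow6_gauss1 :
    Integrable (fun x : ℝ => x ^ 6) (gaussianReal 0 1) := by
  rw [gaussianReal_of_var_ne_zero 0 one_ne_zero]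
  rw [integrable_withDensity_iff (measurable_gaussianPDF 0 1)
    (Filter.Eventually.of_forall fun x => ENNReal.ofReal_lt_top)]
  have : (fun x : ℝ => x ^ 6 * (gaussianPDF 0 1 x).toReal)
      = fun x : ℝ => (Real.sqrt (2 * π * 1))⁻¹ * (x ^ 6 * Real.exp (-(1/2 : ℝ) * x ^ 2)) := by
    funext x
    rw [gaussianPDF, ENNReal.toReal_ofReal (gaussianPDFReal_nonneg 0 1 x), gaussianPDFReal]
    push_cast
    ring_nf
  rw [this]
  apply Integrable.const_mul
  have h := integrable_rpow_mul_exp_neg_mul_sq (b := (1/2 : ℝ)) (by norm_num) (s := 6)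
    (by norm_num)
  refine h.congr (Filter.Eventually.of_forall fun x => ?_)
  show x ^ (6:ℝ) * rexp (-(1/2:ℝ) * x ^ 2) = x ^ (6:ℕ) * rexp (-(1/2:ℝ) * x ^ 2)
  rw [show ((6:ℝ)) = ((6:ℕ):ℝ) by norm_num, Real.rpow_natCast]

noncomputable def grswM6 : ℝ := ∫ x, x ^ 6 ∂(gaussianReal 0 1)

lemma grsw_gauss_scale {v : ℝ} (hv : 0 < v) :
    gaussianReal 0 v.toNNReal
      = Measure.map (fun x => Real.sqrt v * x) (gaussianReal 0 1) := by
  rw [show (fun x : ℝ => Real.sqrt v * x) = (Real.sqrt v * ·) from rfl,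
    gaussianReal_map_const_mul]
  congr 1
  · simp
  · ext
    simp [Real.sq_sqrt hv.le, Real.coe_toNNReal _ hv.le]

lemma grsw_integrable_pow6_gauss {v : ℝ} (hv : 0 < v) :
    Integrable (fun x : ℝ => x ^ 6) (gaussianReal 0 v.toNNReal) := by
  rw [grsw_gauss_scale hv,
    integrable_map_measure (by fun_prop) (by fun_prop)]
  have : ((fun x : ℝ => x ^ 6) ∘ fun x => Real.sqrt v * x)
      = fun x : ℝ => (Real.sqrt v) ^ 6 * x ^ 6 := by
    funext x; simp [Function.comp, mul_pow]
  rw [this]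
  exact grsw_integrable_pow6_gauss1.const_mul _

lemma grsw_moment6_gauss {v : ℝ} (hv : 0 < v) :
    ∫ x, x ^ 6 ∂(gaussianReal 0 v.toNNReal) = v ^ 3 * grswM6 := by
  rw [grsw_gauss_scale hv, integral_map (by fun_prop) (by fun_prop)]
  have : (fun x : ℝ => (Real.sqrt v * x) ^ 6)
      = fun x : ℝ => (Real.sqrt v) ^ 6 * x ^ 6 := by
    funext x; rw [mul_pow]
  simp only [this]
  rw [integral_const_mul]
  congr 1
  rw [show (6 : ℕ) = 2 * 3 from rfl, pow_mul, Real.sq_sqrt hv.le]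

end GRSWAux

/-- Well-definedness of the stochastic integral defined via generalized Riemann sums:
for a standard Brownian motion `B` on `[0,1]`, if two smooth two-point functions `F₁, F₂`
with bounded derivatives up to order three both vanish on the diagonal and have the same
first and second derivatives in the second variable along the diagonal, then the difference
of the generalized Riemann sums `∑ F₁(B_{t_i}, B_{t_{i+1}}) − ∑ F₂(B_{t_i}, B_{t_{i+1}})`
along the uniform partition `t_i = i/n` converges to `0` in `L²(P)`. -/
theorem generalized_riemann_sums_welldefined_wiener
    {Ω : Type*} [MeasurableSpace Ω] (P : Measure Ω) [IsProbabilityMeasure P]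
    (B : ℝ → Ω → ℝ)
    (hmeas : ∀ t, Measurable (B t))
    (hzero : ∀ᵐ ω ∂P, B 0 ω = 0)
    (hgauss : ∀ s t : ℝ, 0 ≤ s → s ≤ t → t ≤ 1 →
      Measure.map (fun ω => B t ω - B s ω) P = gaussianReal 0 (Real.toNNReal (t - s)))
    (hindep : ∀ s t : ℝ, 0 ≤ s → s ≤ t → t ≤ 1 →
      IndepFun (fun ω => B t ω - B s ω) (fun ω => fun r : Set.Iic s => B r ω) P)
    (hcont : ∀ᵐ ω ∂P, ContinuousOn (fun t => B t ω) (Set.Icc 0 1))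
    (F₁ F₂ : ℝ × ℝ → ℝ)
    (hF₁ : ContDiff ℝ (⊤ : ℕ∞) F₁) (hF₂ : ContDiff ℝ (⊤ : ℕ∞) F₂)
    (hF₁b : ∀ k : ℕ, k ≤ 3 → ∃ C, ∀ z : ℝ × ℝ, ‖iteratedFDeriv ℝ k F₁ z‖ ≤ C)
    (hF₂b : ∀ k : ℕ, k ≤ 3 → ∃ C, ∀ z : ℝ × ℝ, ‖iteratedFDeriv ℝ k F₂ z‖ ≤ C)
    (hdiag₁ : ∀ a : ℝ, F₁ (a, a) = 0)
    (hdiag₂ : ∀ a : ℝ, F₂ (a, a) = 0)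
    (hder1 : ∀ a : ℝ,
      deriv (fun y => F₁ (a, y)) a = deriv (fun y => F₂ (a, y)) a)
    (hder2 : ∀ a : ℝ,
      iteratedDeriv 2 (fun y => F₁ (a, y)) a = iteratedDeriv 2 (fun y => F₂ (a, y)) a) :
    Tendsto (fun n : ℕ => ∫ ω,
      ((∑ i ∈ Finset.range n, F₁ (B ((i : ℝ) / n) ω, B (((i : ℝ) + 1) / n) ω))
        - ∑ i ∈ Finset.range n, F₂ (B ((i : ℝ) / n) ω, B (((i : ℝ) + 1) / n) ω)) ^ 2 ∂P)
      atTop (nhds 0) := by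
  classical
  have hG : ContDiff ℝ (⊤ : ℕ∞) (fun z : ℝ × ℝ => F₁ z - F₂ z) := hF₁.sub hF₂
  -- a uniform bound on the derivatives of `G = F₁ - F₂` up to order 3
  have hGb : ∀ k : ℕ, k ≤ 3 → ∃ C, ∀ z : ℝ × ℝ,
      ‖iteratedFDeriv ℝ k (fun z : ℝ × ℝ => F₁ z - F₂ z) z‖ ≤ C := by
    intro k hk
    obtain ⟨C₁, hC₁⟩ := hF₁b k hk
    obtain ⟨C₂, hC₂⟩ := hF₂b k hk
    refine ⟨C₁ + C₂, fun z => ?_⟩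
    have heq : (fun z : ℝ × ℝ => F₁ z - F₂ z) = F₁ + (-F₂) := by
      funext z; simp [sub_eq_add_neg]
    have hg : ContDiff ℝ (k : WithTop ℕ∞) (-F₂) := by exact (hF₂.neg).of_le (by exact_mod_cast le_top)
    rw [heq, iteratedFDeriv_add_apply (hF₁.of_le (by exact_mod_cast le_top)).contDiffAt hg.contDiffAt, iteratedFDeriv_neg_apply]
    calc ‖iteratedFDeriv ℝ k F₁ z + -iteratedFDeriv ℝ k F₂ z‖
        ≤ ‖iteratedFDeriv ℝ k F₁ z‖ + ‖-iteratedFDeriv ℝ k F₂ z‖ := norm_add_le _ _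
      _ ≤ C₁ + C₂ := by rw [norm_neg]; exact add_le_add (hC₁ z) (hC₂ z)
  obtain ⟨c0, hc0⟩ := hGb 0 (by norm_num)
  obtain ⟨c1, hc1⟩ := hGb 1 (by norm_num)
  obtain ⟨c2, hc2⟩ := hGb 2 (by norm_num)
  obtain ⟨c3, hc3⟩ := hGb 3 (by norm_num)
  set C : ℝ := max (max c0 c1) (max c2 c3) with hC_def
  have hC : ∀ k : ℕ, k ≤ 3 → ∀ z : ℝ × ℝ,
      ‖iteratedFDeriv ℝ k (fun z : ℝ × ℝ => F₁ z - F₂ z) z‖ ≤ C := by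
    intro k hk z
    interval_cases k
    · exact (hc0 z).trans ((le_max_left c0 c1).trans (le_max_left _ _))
    · exact (hc1 z).trans ((le_max_right c0 c1).trans (le_max_left _ _))
    · exact (hc2 z).trans ((le_max_left c2 c3).trans (le_max_right _ _))
    · exact (hc3 z).trans ((le_max_right c2 c3).trans (le_max_right _ _))
  have hC0 : 0 ≤ C := le_trans (norm_nonneg _) (hC 0 (by norm_num) (0, 0))
  set K : ℝ := 6 * C with hK_def
  have hK0 : 0 ≤ K := by positivity
  -- Taylor bound
  have hdiff₁ : ∀ a : ℝ, Differentiable ℝ (fun y => F₁ (a, y)) :=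
    fun a => (hF₁.comp (contDiff_const.prodMk contDiff_id)).differentiable (by simp)
  have hdiff₂ : ∀ a : ℝ, Differentiable ℝ (fun y => F₂ (a, y)) :=
    fun a => (hF₂.comp (contDiff_const.prodMk contDiff_id)).differentiable (by simp)
  have htaylor : ∀ a b : ℝ, |F₁ (a, b) - F₂ (a, b)| ≤ K * |b - a| ^ 3 := by
    intro a b
    refine grsw_taylor (fun z : ℝ × ℝ => F₁ z - F₂ z) hG C hC ?_ ?_ ?_ a b
    · intro a; simp [hdiag₁ a, hdiag₂ a]
    · intro a
      have : (fun y => F₁ (a, y) - F₂ (a, y)) = fun y => F₁ (a, y) - F₂ (a, y) := rfl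
      rw [show (fun y => (fun z : ℝ × ℝ => F₁ z - F₂ z) (a, y))
          = fun y => F₁ (a, y) - F₂ (a, y) from rfl]
      rw [deriv_fun_sub (hdiff₁ a a) (hdiff₂ a a),
        hder1 a, sub_self]
    · intro a
      have e : iteratedDeriv 2 (fun y => (fun z : ℝ × ℝ => F₁ z - F₂ z) (a, y)) a
          = iteratedDeriv 2 (fun y => F₁ (a, y)) a
            - iteratedDeriv 2 (fun y => F₂ (a, y)) a := by
        have h' : (fun y => (fun z : ℝ × ℝ => F₁ z - F₂ z) (a, y))
            = (fun y => F₁ (a, y)) - fun y => F₂ (a, y) := rfl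
        rw [h', ← iteratedDerivWithin_univ, ← iteratedDerivWithin_univ,
          ← iteratedDerivWithin_univ]
        exact iteratedDerivWithin_sub (Set.mem_univ a) uniqueDiffOn_univ
          (by exact ((hF₁.comp (contDiff_const.prodMk contDiff_id)).of_le (WithTop.coe_le_coe.mpr le_top)).contDiffWithinAt)
          (by exact ((hF₂.comp (contDiff_const.prodMk contDiff_id)).of_le (WithTop.coe_le_coe.mpr le_top)).contDiffWithinAt)
      rw [e, hder2 a, sub_self]
  -- squeeze
  refine squeeze_zero (fun n => integral_nonneg fun ω => sq_nonneg _) ?_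
    (tendsto_const_div_atTop_nhds_zero_nat (K ^ 2 * grswM6))
  intro n
  rcases Nat.eq_zero_or_pos n with hn | hn
  · subst hn; simp
  have hnpos : (0 : ℝ) < n := by exact_mod_cast hn
  have hn0 : (n : ℝ) ≠ 0 := ne_of_gt hnpos
  have hv : (0 : ℝ) < 1 / n := by positivity
  -- law of increments
  have hXmeas : ∀ i : ℕ,
      Measurable (fun ω => B (((i : ℝ) + 1) / n) ω - B ((i : ℝ) / n) ω) :=
    fun i => (hmeas _).sub (hmeas _)
  have hlaw : ∀ i : ℕ, i < n →
      Measure.map (fun ω => B (((i : ℝ) + 1) / n) ω - B ((i : ℝ) / n) ω) P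
        = gaussianReal 0 ((1 : ℝ) / n).toNNReal := by
    intro i hi
    have h0i : (0 : ℝ) ≤ (i : ℝ) / n := by positivity
    have h12 : (i : ℝ) / n ≤ ((i : ℝ) + 1) / n := by
      exact (div_le_div_iff_of_pos_right hnpos).mpr (by linarith)
    have h21 : ((i : ℝ) + 1) / n ≤ 1 := by
      rw [div_le_one hnpos]
      have : (i : ℝ) + 1 = ((i + 1 : ℕ) : ℝ) := by push_cast; ring
      rw [this]
      exact_mod_cast Nat.succ_le_of_lt hi
    have h := hgauss ((i : ℝ) / n) (((i : ℝ) + 1) / n) h0i h12 h21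
    rw [h]
    congr 1
    congr 1
    field_simp
    ring
  have hXint : ∀ i : ℕ, i < n →
      Integrable (fun ω => (B (((i : ℝ) + 1) / n) ω - B ((i : ℝ) / n) ω) ^ 6) P := by
    intro i hi
    have h := grsw_integrable_pow6_gauss hv
    rw [← hlaw i hi] at h
    have := (integrable_map_measure (by fun_prop) (hXmeas i).aemeasurable).mp h
    simpa [Function.comp_def] using this
  have hXmom : ∀ i : ℕ, i < n →
      ∫ ω, (B (((i : ℝ) + 1) / n) ω - B ((i : ℝ) / n) ω) ^ 6 ∂P
        = ((1 : ℝ) / n) ^ 3 * grswM6 := by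
    intro i hi
    rw [← grsw_moment6_gauss hv, ← hlaw i hi,
      integral_map (hXmeas i).aemeasurable (by fun_prop)]
  -- pointwise bound
  have hpt : ∀ ω : Ω,
      ((∑ i ∈ Finset.range n, F₁ (B ((i : ℝ) / n) ω, B (((i : ℝ) + 1) / n) ω))
        - ∑ i ∈ Finset.range n, F₂ (B ((i : ℝ) / n) ω, B (((i : ℝ) + 1) / n) ω)) ^ 2
      ≤ (n : ℝ) * ∑ i ∈ Finset.range n,
          K ^ 2 * (B (((i : ℝ) + 1) / n) ω - B ((i : ℝ) / n) ω) ^ 6 := by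
    intro ω
    rw [← Finset.sum_sub_distrib]
    calc (∑ i ∈ Finset.range n,
          (F₁ (B ((i : ℝ) / n) ω, B (((i : ℝ) + 1) / n) ω)
            - F₂ (B ((i : ℝ) / n) ω, B (((i : ℝ) + 1) / n) ω))) ^ 2
        ≤ (Finset.range n).card * ∑ i ∈ Finset.range n,
            (F₁ (B ((i : ℝ) / n) ω, B (((i : ℝ) + 1) / n) ω)
              - F₂ (B ((i : ℝ) / n) ω, B (((i : ℝ) + 1) / n) ω)) ^ 2 :=
          sq_sum_le_card_mul_sum_sq
      _ ≤ (n : ℝ) * ∑ i ∈ Finset.range n,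
            K ^ 2 * (B (((i : ℝ) + 1) / n) ω - B ((i : ℝ) / n) ω) ^ 6 := by
          rw [Finset.card_range]
          apply mul_le_mul_of_nonneg_left ?_ (by positivity)
          apply Finset.sum_le_sum
          intro i _
          set x := B (((i : ℝ) + 1) / n) ω - B ((i : ℝ) / n) ω with hx_def
          have hxeq : B (((i : ℝ) + 1) / n) ω = B ((i : ℝ) / n) ω + x := by
            rw [hx_def]; ring
          have h := htaylor (B ((i : ℝ) / n) ω) (B (((i : ℝ) + 1) / n) ω)
          have h2 : (F₁ (B ((i : ℝ) / n) ω, B (((i : ℝ) + 1) / n) ω)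
              - F₂ (B ((i : ℝ) / n) ω, B (((i : ℝ) + 1) / n) ω)) ^ 2
              ≤ (K * |x| ^ 3) ^ 2 := by
            rw [← sq_abs]
            apply pow_le_pow_left₀ (abs_nonneg _)
            rw [hx_def]
            exact h
          calc _ ≤ (K * |x| ^ 3) ^ 2 := h2
            _ = K ^ 2 * (|x| ^ 2) ^ 3 := by ring
            _ = K ^ 2 * x ^ 6 := by rw [sq_abs]; ring
  -- conclude
  have hIbound : Integrable (fun ω => (n : ℝ) * ∑ i ∈ Finset.range n,
      K ^ 2 * (B (((i : ℝ) + 1) / n) ω - B ((i : ℝ) / n) ω) ^ 6) P := by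
    apply Integrable.const_mul
    apply integrable_finset_sum
    intro i hi
    exact (hXint i (Finset.mem_range.mp hi)).const_mul _
  calc ∫ ω, ((∑ i ∈ Finset.range n, F₁ (B ((i : ℝ) / n) ω, B (((i : ℝ) + 1) / n) ω))
        - ∑ i ∈ Finset.range n, F₂ (B ((i : ℝ) / n) ω, B (((i : ℝ) + 1) / n) ω)) ^ 2 ∂P
      ≤ ∫ ω, (n : ℝ) * ∑ i ∈ Finset.range n,
          K ^ 2 * (B (((i : ℝ) + 1) / n) ω - B ((i : ℝ) / n) ω) ^ 6 ∂P :=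
      integral_mono_of_nonneg (Filter.Eventually.of_forall fun ω => sq_nonneg _)
        hIbound (Filter.Eventually.of_forall hpt)
    _ = (n : ℝ) * ∑ i ∈ Finset.range n, K ^ 2 * (((1 : ℝ) / n) ^ 3 * grswM6) := by
        rw [integral_const_mul]
        congr 1
        rw [integral_finset_sum _
          (fun i hi => (hXint i (Finset.mem_range.mp hi)).const_mul _)]
        apply Finset.sum_congr rfl
        intro i hi
        rw [integral_const_mul, hXmom i (Finset.mem_range.mp hi)]
    _ = K ^ 2 * grswM6 / n := by
        rw [Finset.sum_const, Finset.card_range, nsmul_eq_mul]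
        field_simp
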